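/- Let P, Q be homogeneous polynomials in 𝐑 = R[x][y_{i,j} : i=1..n, j≥0], where P has multi-degree (D_1,…,D_n) (total degree D_i in the group of variables y_{i,0}, y_{i,1}, …) and only involves y_{i,j} with j ≤ S_i, and similarly Q with (E_1,…,E_n) and (T_1,…,T_n). Then h(PQ) ≤ min{ Σ_i h(C(D_i+S_i, D_i)), Σ_i h(C(E_i+T_i, E_i)) } + h(min{deg_x(P), deg_x(Q)}) + h(P) + h(Q), where h of a polynomial is the maximum height of its R-coefficients. Moreover, if P or Q consists of a single monomial in the y-variables times an element of R[x], the first term can be dropped. -/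

import Mathlib

open Polynomial

/-- A height function on an integral domain `R`. -/
structure HeightFn (R : Type*) [CommRing R] where
  h : R → ℝ
  h_zero : h 0 = 0
  h_nonneg : ∀ a, 0 ≤ h a
  h_neg : ∀ a, h (-a) = h a
  h_mul : ∀ a b, h (a * b) ≤ h a + h b
  h_sum : ∀ (n : ℕ) (f : Fin n → R) (B : ℝ), 0 ≤ B → (∀ i, h (f i) ≤ B) →
    h (∑ i, f i) ≤ h ((n - 1 : ℕ) : R) + B

namespace HeightFn

variable {R : Type*} [CommRing R] (H : HeightFn R)

/-- Height of a natural number, viewed inside `R`. -/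
def hN (n : ℕ) : ℝ := H.h (n : R)

/-- Height of a polynomial: the maximum height of its coefficients. -/
def hp (p : R[X]) : ℝ := p.support.fold max 0 fun i => H.h (p.coeff i)

end HeightFn

open Polynomial

namespace DFinite

variable {R : Type*} [CommRing R] {n : ℕ}

/-- The ring `𝐑 = R[x][y_{i,j} : i = 1..n, j ≥ 0]`. -/
abbrev MvR (R : Type*) [CommRing R] (n : ℕ) := MvPolynomial (Fin n × ℕ) (Polynomial R)

/-- The `x`-degree of an element of `𝐑`. -/
noncomputable def degx (P : MvR R n) : ℕ := P.support.sup fun m => (MvPolynomial.coeff m P).natDegree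

/-- The height (with respect to a height function on `R`) of an element of `𝐑`:
the maximum height of all elements of `R` appearing as coefficients. -/
noncomputable def mvHeight (H : HeightFn R) (P : MvR R n) : ℝ :=
  P.support.fold max 0 fun m => H.hp (MvPolynomial.coeff m P)

/-- The total degree of a monomial in the `i`-th group `y_{i,0}, y_{i,1}, …` of
variables. -/
def gdeg (i : Fin n) (m : (Fin n × ℕ) →₀ ℕ) : ℕ := m.sum fun v e => if v.1 = i then e else 0

/-- `P` is homogeneous of multi-degree `Dv`, i.e. homogeneous of degree `Dv i` with
respect to each group `y_{i,0}, y_{i,1}, …` of variables. -/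
def GHomog (P : MvR R n) (Dv : Fin n → ℕ) : Prop :=
  ∀ m ∈ P.support, ∀ i, gdeg i m = Dv i

end DFinite

/-!
The `(m, k)`-coefficient of `P * Q` is a sum of products `P_{m₁,k₁} Q_{m₂,k₂}`, each of height
at most `h(P) + h(Q)`. The sum axiom bounds a sum of `N` such terms by
`h(N - 1) + h(P) + h(Q)`; since `N ↦ h(N - 1)` need not be monotone, the nonzero terms are
injected into an explicit finite type, and such bounds compose along products of types
(`IsSumBound`). A monomial `m₁` of `P` is determined by the multisets of second indices in its
groups, elements of `Sym (Fin (S_i + 1)) D_i`, a type with `C(D_i + S_i, D_i)` elements; given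
`m₁`, the term is determined by the `x`-exponent of the factor of smaller `x`-degree, which
leaves `min (deg_x P) (deg_x Q) + 1` choices.
-/

namespace HeightFn

variable {R : Type*} [CommRing R] (H : HeightFn R)

def IsSumBound (α : Type*) [Fintype α] (c : ℝ) : Prop :=
  ∀ (f : α → R) (B : ℝ), 0 ≤ B → (∀ a, H.h (f a) ≤ B) → H.h (∑ a, f a) ≤ c + B

variable {H}

theorem IsSumBound.nonneg {α : Type*} [Fintype α] {c : ℝ} (hα : H.IsSumBound α c) :
    0 ≤ c := by
  simpa [H.h_zero] using hα 0 0 le_rfl (by simp [H.h_zero])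

theorem isSumBound_card (α : Type*) [Fintype α] :
    H.IsSumBound α (H.hN (Fintype.card α - 1)) := by
  intro f B hB hf
  rw [← Equiv.sum_comp (Fintype.equivFin α).symm f]
  exact H.h_sum _ _ B hB fun i => hf _

theorem isSumBound_unit : H.IsSumBound Unit 0 := by
  intro f B _ hf
  simpa using hf ()

theorem IsSumBound.of_equiv {α β : Type*} [Fintype α] [Fintype β] {c : ℝ} (e : α ≃ β)
    (hα : H.IsSumBound α c) : H.IsSumBound β c := by
  intro f B hB hf
  rw [← e.sum_comp f]
  exact hα _ B hB fun a => hf _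

theorem IsSumBound.prod {α β : Type*} [Fintype α] [Fintype β] {c d : ℝ}
    (hα : H.IsSumBound α c) (hβ : H.IsSumBound β d) : H.IsSumBound (α × β) (c + d) := by
  intro f B hB hf
  rw [Fintype.sum_prod_type, add_assoc]
  exact hα _ _ (add_nonneg hβ.nonneg hB) fun a => hβ _ B hB fun b => hf _

theorem IsSumBound.pi {m : ℕ} {τ : Fin m → Type*} [∀ i, Fintype (τ i)] {c : Fin m → ℝ}
    (hτ : ∀ i, H.IsSumBound (τ i) (c i)) :
    H.IsSumBound ((i : Fin m) → τ i) (∑ i, c i) := by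
  induction m with
  | zero =>
    intro f B _ hf
    simpa using hf default
  | succ m ih =>
    rw [Fin.sum_univ_succ]
    exact ((hτ 0).prod (ih fun i => hτ i.succ)).of_equiv (Fin.consEquiv τ)

theorem IsSumBound.h_sum_le_of_injOn {α ι : Type*} [Fintype α] {c : ℝ}
    (hα : H.IsSumBound α c) {s : Finset ι} {f : ι → R} {B : ℝ} (hB : 0 ≤ B)
    (hf : ∀ a ∈ s, H.h (f a) ≤ B)
    (g : ι → α) (hg : Set.InjOn g {a | a ∈ s ∧ f a ≠ 0}) :
    H.h (∑ a ∈ s, f a) ≤ c + B := by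
  classical
  rw [← Finset.sum_filter_ne_zero,
    ← Finset.sum_fiberwise_of_maps_to (fun a _ => Finset.mem_univ (g a))]
  refine hα _ B hB fun x => ?_
  set t := {b ∈ {b ∈ s | f b ≠ 0} | g b = x} with ht
  rcases t.eq_empty_or_nonempty with h | ⟨a, ha⟩
  · simpa [h, H.h_zero] using hB
  · have hmem : ∀ b ∈ t, (b ∈ s ∧ f b ≠ 0) ∧ g b = x := fun b hb => by
      simpa only [ht, Finset.mem_filter] using hb
    have hta : t = {a} := Finset.eq_singleton_iff_unique_mem.mpr
      ⟨ha, fun b hb => hg (hmem b hb).1 (hmem a ha).1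
        ((hmem b hb).2.trans (hmem a ha).2.symm)⟩
    rw [hta, Finset.sum_singleton]
    exact hf a (hmem a ha).1.1

theorem hN_nonneg (n : ℕ) : 0 ≤ H.hN n := H.h_nonneg _

theorem hp_nonneg (p : R[X]) : 0 ≤ H.hp p := (Finset.le_fold_max 0).mpr (Or.inl le_rfl)

theorem h_coeff_le_hp (p : R[X]) (k : ℕ) : H.h (p.coeff k) ≤ H.hp p := by
  by_cases hk : k ∈ p.support
  · exact (Finset.le_fold_max _).mpr (Or.inr ⟨k, hk, le_rfl⟩)
  · rw [notMem_support_iff.mp hk, H.h_zero]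
    exact H.hp_nonneg p

theorem h_coeff_mul_le {p q : R[X]} {d : ℕ} (hd : min p.natDegree q.natDegree ≤ d) (k : ℕ) :
    H.h ((p * q).coeff k) ≤ H.hN d + (H.hp p + H.hp q) := by
  wlog hpd : p.natDegree ≤ d generalizing p q
  · rw [mul_comm, add_comm (H.hp p)]
    exact this (min_comm p.natDegree _ ▸ hd) ((min_le_iff.mp hd).resolve_left hpd)
  have hcard : Fintype.card (Fin (d + 1)) - 1 = d := by simp
  rw [coeff_mul, ← hcard]
  refine (isSumBound_card (Fin (d + 1))).h_sum_le_of_injOn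
    (add_nonneg (H.hp_nonneg p) (H.hp_nonneg q))
    (fun x _ => (H.h_mul _ _).trans (add_le_add (H.h_coeff_le_hp p _) (H.h_coeff_le_hp q _)))
    (fun x => ⟨min x.1 d, by omega⟩) ?_
  rintro x ⟨hx, hx0⟩ y ⟨hy, hy0⟩ hxy
  have hxd := (le_natDegree_of_ne_zero (left_ne_zero_of_mul hx0)).trans hpd
  have hyd := (le_natDegree_of_ne_zero (left_ne_zero_of_mul hy0)).trans hpd
  have hxy' := congrArg Fin.val hxy
  simp only at hxy'
  exact (Finset.HasAntidiagonal.antidiagonal_congr hx hy).mpr (by omega)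

end HeightFn

namespace DFinite

variable {R : Type*} [CommRing R] {n : ℕ}

theorem natDegree_coeff_le_degx (P : MvR R n) (m : (Fin n × ℕ) →₀ ℕ) :
    (MvPolynomial.coeff m P).natDegree ≤ degx P := by
  by_cases hm : m ∈ P.support
  · exact Finset.le_sup (f := fun w => (MvPolynomial.coeff w P).natDegree) hm
  · simp [MvPolynomial.notMem_support_iff.mp hm]

theorem mvHeight_nonneg (H : HeightFn R) (P : MvR R n) : 0 ≤ mvHeight H P :=
  (Finset.le_fold_max 0).mpr (Or.inl le_rfl)

theorem hp_coeff_le_mvHeight (H : HeightFn R) (P : MvR R n) (m : (Fin n × ℕ) →₀ ℕ) :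
    H.hp (MvPolynomial.coeff m P) ≤ mvHeight H P := by
  by_cases hm : m ∈ P.support
  · exact (Finset.le_fold_max _).mpr (Or.inr ⟨m, hm, le_rfl⟩)
  · rw [MvPolynomial.notMem_support_iff.mp hm, HeightFn.hp, support_zero, Finset.fold_empty]
    exact mvHeight_nonneg H P

theorem mvHeight_le {H : HeightFn R} {P : MvR R n} {B : ℝ} (hB : 0 ≤ B)
    (hc : ∀ m k, H.h ((MvPolynomial.coeff m P).coeff k) ≤ B) : mvHeight H P ≤ B :=
  (Finset.fold_max_le B).mpr
    ⟨hB, fun m _ => (Finset.fold_max_le B).mpr ⟨hB, fun k _ => hc m k⟩⟩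

theorem mvHeight_mul_le_of_injOn (H : HeightFn R) (P Q : MvR R n) {α : Type*} [Fintype α]
    {c : ℝ} (hα : H.IsSumBound α c) (e : ((Fin n × ℕ) →₀ ℕ) → α)
    (he : Set.InjOn e P.support) :
    mvHeight H (P * Q) ≤ c + H.hN (min (degx P) (degx Q)) + mvHeight H P + mvHeight H Q := by
  have hB := add_nonneg (H.hN_nonneg (min (degx P) (degx Q)))
    (add_nonneg (mvHeight_nonneg H P) (mvHeight_nonneg H Q))
  refine mvHeight_le (by linarith [hα.nonneg]) fun m k => ?_
  rw [MvPolynomial.coeff_mul, finsetSum_coeff, add_assoc, add_assoc]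
  refine hα.h_sum_le_of_injOn hB (fun x _ => ?_) (fun x => e x.1) ?_
  · have hd := min_le_min (natDegree_coeff_le_degx P x.1) (natDegree_coeff_le_degx Q x.2)
    refine (H.h_coeff_mul_le hd k).trans ?_
    gcongr
    exacts [hp_coeff_le_mvHeight H P _, hp_coeff_le_mvHeight H Q _]
  · rintro x ⟨hx, hx0⟩ y ⟨hy, hy0⟩ hxy
    have mem_support {z : _ × _}
        (hz : (MvPolynomial.coeff z.1 P * MvPolynomial.coeff z.2 Q).coeff k ≠ 0) :
        z.1 ∈ P.support :=
      MvPolynomial.mem_support_iff.mpr fun h => hz (by rw [h, zero_mul, coeff_zero])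
    have h1 : x.1 = y.1 := he (mem_support hx0) (mem_support hy0) hxy
    rw [Finset.HasAntidiagonal.mem_antidiagonal] at hx hy
    exact Prod.ext h1 (add_left_cancel (a := x.1) (by rw [hx, h1, hy]))

def groupMultiset (S : Fin n → ℕ) (i : Fin n) (m : (Fin n × ℕ) →₀ ℕ) :
    Multiset (Fin (S i + 1)) :=
  ∑ j : Fin (S i + 1), Multiset.replicate (m (i, j)) j

theorem count_groupMultiset (S : Fin n → ℕ) (i : Fin n) (m : (Fin n × ℕ) →₀ ℕ)
    (j : Fin (S i + 1)) : (groupMultiset S i m).count j = m (i, j) := by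
  classical
  simp [groupMultiset, Multiset.count_sum', Multiset.count_replicate]

theorem card_groupMultiset {S : Fin n → ℕ} {m : (Fin n × ℕ) →₀ ℕ}
    (hS : ∀ v ∈ m.support, v.2 ≤ S v.1) (i : Fin n) :
    Multiset.card (groupMultiset S i m) = gdeg i m := by
  classical
  let emb : Fin (S i + 1) ↪ Fin n × ℕ :=
    ⟨fun j => (i, j), fun a b h => Fin.ext (by simpa using h)⟩
  have hsum : Multiset.card (groupMultiset S i m) = ∑ v ∈ Finset.univ.map emb, m v := by
    simp only [groupMultiset, Multiset.card_sum, Multiset.card_replicate, Finset.sum_map]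
    rfl
  rw [hsum, gdeg, Finsupp.sum, ← Finset.sum_filter]
  refine (Finset.sum_subset (fun v hv => ?_) fun v hv hvn => ?_).symm
  · obtain ⟨hvm, rfl⟩ := Finset.mem_filter.mp hv
    exact Finset.mem_map.mpr ⟨⟨v.2, Nat.lt_succ_of_le (hS v hvm)⟩, Finset.mem_univ _, rfl⟩
  · obtain ⟨j, -, rfl⟩ := Finset.mem_map.mp hv
    by_contra hne
    exact hvn (Finset.mem_filter.mpr ⟨Finsupp.mem_support_iff.mpr hne, rfl⟩)

/-- `none` is the junk value for monomials of the wrong degree; it also makes the index type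
have `C(D_i + S_i, D_i) + 1` elements, as the sum axiom requires. -/
def groupSym (S D : Fin n → ℕ) (i : Fin n) (m : (Fin n × ℕ) →₀ ℕ) :
    Option (Sym (Fin (S i + 1)) (D i)) :=
  if h : Multiset.card (groupMultiset S i m) = D i then some ⟨_, h⟩ else none

theorem groupSym_injOn (S D : Fin n → ℕ) :
    Set.InjOn (fun m i => groupSym S D i m)
      {m | (∀ i, gdeg i m = D i) ∧ ∀ v ∈ m.support, v.2 ≤ S v.1} := by
  have groupSym_eq {m : (Fin n × ℕ) →₀ ℕ}
      (hm : (∀ i, gdeg i m = D i) ∧ ∀ v ∈ m.support, v.2 ≤ S v.1) (i : Fin n) :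
      groupSym S D i m =
        some ⟨groupMultiset S i m, (card_groupMultiset hm.2 i).trans (hm.1 i)⟩ :=
    dif_pos _
  intro m₁ hm₁ m₂ hm₂ h
  ext ⟨i, j⟩
  by_cases hj : j ≤ S i
  · have hms : groupMultiset S i m₁ = groupMultiset S i m₂ := by
      have hi := congrFun h i
      simp only [groupSym_eq hm₁, groupSym_eq hm₂] at hi
      exact congrArg Subtype.val (Option.some_injective _ hi)
    simpa [count_groupMultiset] using
      congrArg (Multiset.count (⟨j, by omega⟩ : Fin (S i + 1))) hms
  · have zero_of_gt {m : (Fin n × ℕ) →₀ ℕ} (hm : ∀ v ∈ m.support, v.2 ≤ S v.1) :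
        m (i, j) = 0 :=
      Finsupp.notMem_support_iff.mp fun hv => hj (hm _ hv)
    rw [zero_of_gt hm₁.2, zero_of_gt hm₂.2]

theorem card_option_sym_fin_sub_one (s d : ℕ) :
    Fintype.card (Option (Sym (Fin (s + 1)) d)) - 1 = (d + s).choose d := by
  rw [Fintype.card_option, Sym.card_sym_eq_choose, Fintype.card_fin, Nat.add_sub_cancel]
  congr 1
  omega

theorem mvHeight_mul_le_of_gHomog (H : HeightFn R) (P Q : MvR R n) (D S : Fin n → ℕ)
    (hP : GHomog P D) (hPS : ∀ m ∈ P.support, ∀ v ∈ m.support, v.2 ≤ S v.1) :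
    mvHeight H (P * Q) ≤ ∑ i, H.hN ((D i + S i).choose (D i)) +
      H.hN (min (degx P) (degx Q)) + mvHeight H P + mvHeight H Q := by
  have hα : H.IsSumBound ((i : Fin n) → Option (Sym (Fin (S i + 1)) (D i)))
      (∑ i, H.hN ((D i + S i).choose (D i))) :=
    HeightFn.IsSumBound.pi fun i => by
      simpa only [card_option_sym_fin_sub_one] using
        HeightFn.isSumBound_card (H := H) (Option (Sym (Fin (S i + 1)) (D i)))
  exact mvHeight_mul_le_of_injOn H P Q hα _
    ((groupSym_injOn S D).mono fun m hm => by exact ⟨hP m hm, hPS m hm⟩)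

theorem mvHeight_mul_le_of_card_support_le_one (H : HeightFn R) (P Q : MvR R n)
    (hP : P.support.card ≤ 1) :
    mvHeight H (P * Q) ≤ H.hN (min (degx P) (degx Q)) + mvHeight H P + mvHeight H Q := by
  simpa using mvHeight_mul_le_of_injOn H P Q HeightFn.isSumBound_unit (fun _ => ())
    fun m₁ hm₁ m₂ hm₂ _ => Finset.card_le_one.mp hP m₁ hm₁ m₂ hm₂

end DFinite

open DFinite in
theorem mv_height_mul_general {R : Type*} [CommRing R] (H : HeightFn R) {n : ℕ}
    (P Q : MvR R n) (Dv Sv Ev Tv : Fin n → ℕ)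
    (hPhom : GHomog P Dv) (hQhom : GHomog Q Ev)
    (hPS : ∀ m ∈ P.support, ∀ v ∈ m.support, v.2 ≤ Sv v.1)
    (hQT : ∀ m ∈ Q.support, ∀ v ∈ m.support, v.2 ≤ Tv v.1) :
    mvHeight H (P * Q) ≤
        min (∑ i, H.hN ((Dv i + Sv i).choose (Dv i)))
            (∑ i, H.hN ((Ev i + Tv i).choose (Ev i))) +
          H.hN (min (degx P) (degx Q)) + mvHeight H P + mvHeight H Q ∧
    ((P.support.card ≤ 1 ∨ Q.support.card ≤ 1) →
      mvHeight H (P * Q) ≤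
        H.hN (min (degx P) (degx Q)) + mvHeight H P + mvHeight H Q) := by
  constructor
  · have hP := mvHeight_mul_le_of_gHomog H P Q Dv Sv hPhom hPS
    have hQ := mvHeight_mul_le_of_gHomog H Q P Ev Tv hQhom hQT
    rw [mul_comm Q P, min_comm (degx Q)] at hQ
    rcases min_choice (∑ i, H.hN ((Dv i + Sv i).choose (Dv i)))
      (∑ i, H.hN ((Ev i + Tv i).choose (Ev i))) with h | h <;> rw [h] <;> linarith
  · rintro (hP | hQ)
    · exact mvHeight_mul_le_of_card_support_le_one H P Q hP
    · have := mvHeight_mul_le_of_card_support_le_one H Q P hQ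
      rw [mul_comm Q P, min_comm (degx Q)] at this
      linarith

open DFinite in
/-- height of a product of homogeneous polynomials in
`𝐑 = R[x][y_{i,j}]`.  If `P` has multi-degree `(D_1,…,D_n)` and only involves
`y_{i,j}` with `j ≤ S_i`, and `Q` has multi-degree `(E_1,…,E_n)` with `j ≤ T_i`,
then `h(PQ)` is bounded as stated; the binomial term can be dropped when `P` or `Q`
is a single monomial times an element of `R[x]`. -/
theorem mv_height_mul {R : Type*} [CommRing R] [IsDomain R] (H : HeightFn R) {n : ℕ}
    (P Q : MvR R n) (Dv Sv Ev Tv : Fin n → ℕ)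
    (hPhom : GHomog P Dv) (hQhom : GHomog Q Ev)
    (hPS : ∀ m ∈ P.support, ∀ v ∈ m.support, v.2 ≤ Sv v.1)
    (hQT : ∀ m ∈ Q.support, ∀ v ∈ m.support, v.2 ≤ Tv v.1) :
    mvHeight H (P * Q) ≤
        min (∑ i, H.hN ((Dv i + Sv i).choose (Dv i)))
            (∑ i, H.hN ((Ev i + Tv i).choose (Ev i))) +
          H.hN (min (degx P) (degx Q)) + mvHeight H P + mvHeight H Q ∧
    ((P.support.card ≤ 1 ∨ Q.support.card ≤ 1) →
      mvHeight H (P * Q) ≤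
        H.hN (min (degx P) (degx Q)) + mvHeight H P + mvHeight H Q) :=
  mv_height_mul_general H P Q Dv Sv Ev Tv hPhom hQhom hPS hQT
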